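/- Every composition (f,g)_w in k⟨X⟩ ⊗ k⟨Y⟩ has leading word strictly less than the ambiguity w: for each of the composition types (X-inclusion, Y-inclusion, X,Y-inclusion, X,Y-skew-inclusion, X-intersection, Y-intersection, X,Y-intersection, X,Y-skew-intersection, and mixed types), the leading word of (f,g)_w is < w in the order on N. -/

import Mathlib

/-- A monomial order: a well-founded strict total order compatible with multiplication. -/
def MonOrd {M : Type*} [Monoid M] (lt : M → M → Prop) : Prop :=
  IsStrictTotalOrder M lt ∧ WellFounded lt ∧
    ∀ u v w₁ w₂ : M, lt u v → lt (w₁ * u * w₂) (w₁ * v * w₂)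

/-- `m` is the leading word of `f` with respect to the order `lt`. -/
def IsLeadR {k M : Type*} [Semiring k] (lt : M → M → Prop)
    (f : MonoidAlgebra k M) (m : M) : Prop :=
  m ∈ f.coeff.support ∧ ∀ u ∈ f.coeff.support, u ≠ m → lt u m

/-- `f` is monic: its leading coefficient is `1`. -/
def MonicR {k M : Type*} [Semiring k] (lt : M → M → Prop) (f : MonoidAlgebra k M) : Prop :=
  ∃ m, IsLeadR lt f m ∧ f.coeff m = 1

/-- The monomial `m` viewed as an element of the monoid algebra. -/
noncomputable def mono (k : Type*) {M : Type*} [Semiring k] [Monoid M] (m : M) :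
    MonoidAlgebra k M := MonoidAlgebra.of k M m

/-- `h` is trivial modulo `(S, w)`: it is a linear combination `Σ αᵢ aᵢ sᵢ bᵢ`
with `sᵢ ∈ S` and leading words `aᵢ s̄ᵢ bᵢ < w`. -/
def TrivModR {k M : Type*} [Semiring k] [Monoid M] (lt : M → M → Prop)
    (S : Set (MonoidAlgebra k M)) (w : M) (h : MonoidAlgebra k M) : Prop :=
  ∃ (n : ℕ) (α : Fin n → k) (a b : Fin n → M) (s : Fin n → MonoidAlgebra k M),
    (∀ i, s i ∈ S) ∧
    h = ∑ i, α i • (mono k (a i) * s i * mono k (b i)) ∧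
    ∀ i, ∃ m, IsLeadR lt (s i) m ∧ lt (a i * m * b i) w

/-- Gröbner–Shirshov basis in a free associative algebra `k⟨Z⟩`:
all intersection and inclusion compositions are trivial. -/
def FIsGSB {k Z : Type*} [Ring k] (lt : FreeMonoid Z → FreeMonoid Z → Prop)
    (S : Set (MonoidAlgebra k (FreeMonoid Z))) : Prop :=
  (∀ s ∈ S, MonicR lt s) ∧
  ∀ f ∈ S, ∀ g ∈ S, ∀ mf mg : FreeMonoid Z, IsLeadR lt f mf → IsLeadR lt g mg →
    ((∀ a b : FreeMonoid Z, mf * b = a * mg →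
        (mf * b).length < mf.length + mg.length →
        TrivModR lt S (mf * b) (f * mono k b - mono k a * g)) ∧
     (∀ a b : FreeMonoid Z, mf = a * mg * b →
        TrivModR lt S mf (f - mono k a * g * mono k b)))

/-- the deg-lex order on words induced by an order on letters -/
def degLex {A : Type*} (ltA : A → A → Prop) (u v : FreeMonoid A) : Prop :=
  u.length < v.length ∨ (u.length = v.length ∧ List.Lex ltA u.toList v.toList)

/-- Normal words of `k⟨X⟩ ⊗ k⟨Y⟩`: the monoid `X* × Y*`
(whose multiplication is `(u^X u^Y)(v^X v^Y) = u^X v^X u^Y v^Y`). -/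
abbrev NW (X Y : Type*) := FreeMonoid X × FreeMonoid Y

/-- the (deg-)lex order on `N = X*Y*` built from orders on `X*` and `Y*`:
`u > v` iff `u^X > v^X` or (`u^X = v^X` and `u^Y > v^Y`). -/
def lexNW {X Y : Type*} (ltX : FreeMonoid X → FreeMonoid X → Prop)
    (ltY : FreeMonoid Y → FreeMonoid Y → Prop) (u v : NW X Y) : Prop :=
  ltX u.1 v.1 ∨ (u.1 = v.1 ∧ ltY u.2 v.2)

/-- All compositions `(f,g)_w = p` in `k⟨X⟩ ⊗ k⟨Y⟩`, where `mf, mg` are the leading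
words of `f, g`.  The cases are: 1.1 `X`-inclusion only, 1.2 `Y`-inclusion only,
1.3 `X,Y`-inclusion, 1.4 `X,Y`-skew-inclusion, 2.1 `X`-intersection only,
2.2 `Y`-intersection only, 2.3 `X,Y`-intersection, 2.4 `X,Y`-skew-intersection,
3.1 `X`-inclusion and `Y`-intersection, 3.2 `X`-intersection and `Y`-inclusion. -/
def IsComp {k X Y : Type*} [Ring k] (f g : MonoidAlgebra k (NW X Y))
    (mf mg : NW X Y) (p : MonoidAlgebra k (NW X Y)) (w : NW X Y) : Prop :=
  let e : NW X Y → MonoidAlgebra k (NW X Y) := fun m => mono k m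
  let fx := mf.1; let fy := mf.2; let gx := mg.1; let gy := mg.2
  -- 1.1 X-inclusion only
  (∃ (a b : FreeMonoid X) (c : FreeMonoid Y), fx = a * gx * b ∧
     ((w = (fx, fy * c * gy) ∧ p = f * e (1, c * gy) - e (a, fy * c) * g * e (b, 1)) ∨
      (w = (fx, gy * c * fy) ∧ p = e (1, gy * c) * f - e (a, 1) * g * e (b, c * fy)))) ∨
  -- 1.2 Y-inclusion only
  (∃ (a : FreeMonoid X) (c d : FreeMonoid Y), fy = c * gy * d ∧
     ((w = (fx * a * gx, fy) ∧ p = f * e (a * gx, 1) - e (fx * a, c) * g * e (1, d)) ∨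
      (w = (gx * a * fx, fy) ∧ p = e (gx * a, 1) * f - e (1, c) * g * e (a * fx, d)))) ∨
  -- 1.3 X,Y-inclusion
  (∃ (a b : FreeMonoid X) (c d : FreeMonoid Y), fx = a * gx * b ∧ fy = c * gy * d ∧
     w = (fx, fy) ∧ p = f - e (a, c) * g * e (b, d)) ∨
  -- 1.4 X,Y-skew-inclusion
  (∃ (a b : FreeMonoid X) (c d : FreeMonoid Y), fx = a * gx * b ∧ gy = c * fy * d ∧
     w = (fx, gy) ∧ p = e (1, c) * f * e (1, d) - e (a, 1) * g * e (b, 1)) ∨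
  -- 2.1 X-intersection only
  (∃ (a b : FreeMonoid X) (c : FreeMonoid Y), fx * a = b * gx ∧
     (fx * a).length < fx.length + gx.length ∧
     ((w = (fx * a, fy * c * gy) ∧ p = f * e (a, c * gy) - e (b, fy * c) * g) ∨
      (w = (fx * a, gy * c * fy) ∧
        p = e (1, gy * c) * f * e (a, 1) - e (b, 1) * g * e (1, c * fy)))) ∨
  -- 2.2 Y-intersection only
  (∃ (a : FreeMonoid X) (c d : FreeMonoid Y), fy * c = d * gy ∧
     (fy * c).length < fy.length + gy.length ∧
     ((w = (fx * a * gx, fy * c) ∧ p = f * e (a * gx, c) - e (fx * a, d) * g) ∨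
      (w = (gx * a * fx, fy * c) ∧
        p = e (gx * a, 1) * f * e (1, c) - e (1, d) * g * e (a * fx, 1)))) ∨
  -- 2.3 X,Y-intersection
  (∃ (a b : FreeMonoid X) (c d : FreeMonoid Y), fx * a = b * gx ∧ fy * c = d * gy ∧
     (fx * a).length < fx.length + gx.length ∧ (fy * c).length < fy.length + gy.length ∧
     w = (fx * a, fy * c) ∧ p = f * e (a, c) - e (b, d) * g) ∨
  -- 2.4 X,Y-skew-intersection
  (∃ (a b : FreeMonoid X) (c d : FreeMonoid Y), fx * a = b * gx ∧ c * fy = gy * d ∧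
     (fx * a).length < fx.length + gx.length ∧ (c * fy).length < fy.length + gy.length ∧
     w = (fx * a, c * fy) ∧ p = e (1, c) * f * e (a, 1) - e (b, 1) * g * e (1, d)) ∨
  -- 3.1 X-inclusion and Y-intersection
  (∃ (a b : FreeMonoid X) (c d : FreeMonoid Y), fx = a * gx * b ∧
     ((fy * c = d * gy ∧ (fy * c).length < fy.length + gy.length ∧
        w = (fx, fy * c) ∧ p = f * e (1, c) - e (a, d) * g * e (b, 1)) ∨
      (c * fy = gy * d ∧ (c * fy).length < fy.length + gy.length ∧
        w = (fx, c * fy) ∧ p = e (1, c) * f - e (a, 1) * g * e (b, d)))) ∨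
  -- 3.2 X-intersection and Y-inclusion
  (∃ (a b : FreeMonoid X) (c d : FreeMonoid Y), fx * a = b * gx ∧
     (fx * a).length < fx.length + gx.length ∧
     ((fy = c * gy * d ∧ w = (fx * a, fy) ∧ p = f * e (a, 1) - e (b, c) * g * e (1, d)) ∨
      (gy = c * fy * d ∧ w = (fx * a, gy) ∧ p = e (1, c) * f * e (a, d) - e (b, 1) * g)))

/-- Gröbner–Shirshov basis in `k⟨X⟩ ⊗ k⟨Y⟩`: a set of monic polynomials
all of whose compositions are trivial. -/
def IsGSB {k X Y : Type*} [Ring k] (lt : NW X Y → NW X Y → Prop)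
    (S : Set (MonoidAlgebra k (NW X Y))) : Prop :=
  (∀ s ∈ S, MonicR lt s) ∧
  ∀ f ∈ S, ∀ g ∈ S, ∀ (mf mg : NW X Y) (p : MonoidAlgebra k (NW X Y)) (w : NW X Y),
    IsLeadR lt f mf → IsLeadR lt g mg → IsComp f g mf mg p w → TrivModR lt S w p

/-- the abelianization map `γ : X* → [X]`, with `[X]` the free commutative monoid
on `X` realized as `Multiplicative (Multiset X)`. -/
def gam {X : Type*} (u : FreeMonoid X) : Multiplicative (Multiset X) :=
  Multiplicative.ofAdd (↑u.toList : Multiset X)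

/-- the order on `X*` lifted from a monomial order on `[X]`:
`u > v` iff `γ(u) > γ(v)`, or `γ(u) = γ(v)` and `u >_lex v`. -/
def liftOrd {X : Type*} [LinearOrder X]
    (ltC : Multiplicative (Multiset X) → Multiplicative (Multiset X) → Prop)
    (u v : FreeMonoid X) : Prop :=
  ltC (gam u) (gam v) ∨ (gam u = gam v ∧ List.Lex (· < ·) u.toList v.toList)

/-- `δ` on monomials: the weakly increasing word representing a commutative monomial. -/
noncomputable def dword {X : Type*} [LinearOrder X] (m : Multiplicative (Multiset X)) :
    FreeMonoid X :=
  FreeMonoid.ofList (Multiset.sort (Multiplicative.toAdd m) (· ≤ ·))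

/-- the lexicographic splitting `δ : k[X] → k⟨X⟩`. -/
noncomputable def deltaMap {k X : Type*} [Semiring k] [LinearOrder X]
    (f : MonoidAlgebra k (Multiplicative (Multiset X))) :
    MonoidAlgebra k (FreeMonoid X) :=
  MonoidAlgebra.ofCoeff (Finsupp.mapDomain dword f.coeff)

/-- the set `S₁ = {xᵢxⱼ - xⱼxᵢ : xᵢ > xⱼ}` of commutators in `k⟨X⟩`. -/
noncomputable def commSet (k X : Type*) [Ring k] [LinearOrder X] :
    Set (MonoidAlgebra k (FreeMonoid X)) :=
  {p | ∃ i j : X, j < i ∧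
    p = mono k (FreeMonoid.of i * FreeMonoid.of j) - mono k (FreeMonoid.of j * FreeMonoid.of i)}

/-- `U(m)`: commutative monomials in the variables strictly between the least and the
greatest variable occurring in `m`. -/
def UU {X : Type*} [LinearOrder X] (m : Multiplicative (Multiset X)) :
    Set (Multiplicative (Multiset X)) :=
  {u | ∀ y ∈ Multiplicative.toAdd u,
     (∃ z ∈ Multiplicative.toAdd m, z < y) ∧ (∃ z ∈ Multiplicative.toAdd m, y < z)}

/-- Normal words of `k[X] ⊗ k⟨Y⟩`: the monoid `[X]Y*`. -/
abbrev CW (X Y : Type*) := Multiplicative (Multiset X) × FreeMonoid Y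

/-- the order on `[X]Y*`: compare the `Y`-part first, then the `[X]`-part. -/
def cwOrd {X Y : Type*}
    (ltC : Multiplicative (Multiset X) → Multiplicative (Multiset X) → Prop)
    (ltY : FreeMonoid Y → FreeMonoid Y → Prop) (u v : CW X Y) : Prop :=
  ltY u.2 v.2 ∨ (u.2 = v.2 ∧ ltC u.1 v.1)

/-- the order on `X*Y*` lifted from the order on `[X]Y*`, breaking ties by `lex`
on the `X`-component. -/
def liftNW {X Y : Type*} [LinearOrder X]
    (ltC : Multiplicative (Multiset X) → Multiplicative (Multiset X) → Prop)
    (ltY : FreeMonoid Y → FreeMonoid Y → Prop) (u v : NW X Y) : Prop :=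
  cwOrd ltC ltY (gam u.1, u.2) (gam v.1, v.2) ∨
    ((gam u.1 = gam v.1 ∧ u.2 = v.2) ∧ List.Lex (· < ·) u.1.toList v.1.toList)

/-- `δ : k[X] ⊗ k⟨Y⟩ → k⟨X⟩ ⊗ k⟨Y⟩`, the lexicographic splitting extended by the
identity on `Y`-words. -/
noncomputable def deltaNW {k X Y : Type*} [Semiring k] [LinearOrder X]
    (f : MonoidAlgebra k (CW X Y)) : MonoidAlgebra k (NW X Y) :=
  MonoidAlgebra.ofCoeff (Finsupp.mapDomain (fun m : CW X Y => ((dword m.1, m.2) : NW X Y)) f.coeff)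

/-- Mikhalev–Zolotykh compositions in `k[X] ⊗ k⟨Y⟩`: inclusion `C₁`, overlap `C₂`
and external `C₃` compositions, where `mf`, `mg` are the leading words of `f`, `g`,
and `L = lcm(mf^X, mg^X)`. -/
def MZComp {k X Y : Type*} [Ring k] [DecidableEq X]
    (ltC : Multiplicative (Multiset X) → Multiplicative (Multiset X) → Prop)
    (f g : MonoidAlgebra k (CW X Y)) (mf mg : CW X Y)
    (p : MonoidAlgebra k (CW X Y)) (w : CW X Y) : Prop :=
  let e : CW X Y → MonoidAlgebra k (CW X Y) := fun m => mono k m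
  let fX := Multiplicative.toAdd mf.1; let gX := Multiplicative.toAdd mg.1
  let L : Multiset X := fX ∪ gX
  let Lf : Multiplicative (Multiset X) := Multiplicative.ofAdd (L - fX)
  let Lg : Multiplicative (Multiset X) := Multiplicative.ofAdd (L - gX)
  -- C₁ : inclusion
  (∃ c d : FreeMonoid Y, mf.2 = c * mg.2 * d ∧
     (mf.2 = mg.2 → (mg.1 = mf.1 ∨ ltC mg.1 mf.1)) ∧ (mg.2 = 1 → c = 1) ∧
     w = (Multiplicative.ofAdd L, mf.2) ∧
     p = e (Lf, 1) * f - e (Lg, c) * g * e (1, d)) ∨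
  -- C₂ : overlap
  (∃ c d c₀ : FreeMonoid Y, c₀ ≠ 1 ∧ mf.2 = c * c₀ ∧ mg.2 = c₀ * d ∧
     w = (Multiplicative.ofAdd L, mf.2 * d) ∧
     p = e (Lf, 1) * f * e (1, d) - e (Lg, c) * g) ∨
  -- C₃ : external
  (∃ c₀ : FreeMonoid Y, fX ∩ gX ≠ 0 ∧ mf.2 ≠ 1 ∧ mg.2 ≠ 1 ∧
     w = (Multiplicative.ofAdd L, mf.2 * c₀ * mg.2) ∧
     p = e (Lf, 1) * f * e (1, c₀ * mg.2) - e (Lg, mf.2 * c₀) * g)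

/-- Gröbner–Shirshov basis in `k[X] ⊗ k⟨Y⟩` in the sense of Mikhalev–Zolotykh. -/
def MZGSB {k X Y : Type*} [Ring k] [DecidableEq X]
    (ltC : Multiplicative (Multiset X) → Multiplicative (Multiset X) → Prop)
    (ltY : FreeMonoid Y → FreeMonoid Y → Prop)
    (S : Set (MonoidAlgebra k (CW X Y))) : Prop :=
  (∀ s ∈ S, MonicR (cwOrd ltC ltY) s) ∧
  ∀ f ∈ S, ∀ g ∈ S, ∀ (mf mg : CW X Y) (p : MonoidAlgebra k (CW X Y)) (w : CW X Y),
    IsLeadR (cwOrd ltC ltY) f mf → IsLeadR (cwOrd ltC ltY) g mg →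
    MZComp ltC f g mf mg p w → TrivModR (cwOrd ltC ltY) S w p

/-! Every composition has the shape `p = a₁ f b₁ - a₂ g b₂` with
`a₁ f̄ b₁ = a₂ ḡ b₂ = w`. Since the order on `N` is compatible with multiplication, both
products are monic with leading word `w`, so `w` cancels in the difference and every word
that survives is `< w`. -/

section LeadingWord

variable {k M : Type*}

theorem IsLeadR.unique [Semiring k] {lt : M → M → Prop} [Std.Asymm lt]
    {f : MonoidAlgebra k M} {m m' : M} (hm : IsLeadR lt f m) (hm' : IsLeadR lt f m') :
    m = m' := by
  by_contra hne
  exact asymm (hm'.2 m hm.1 hne) (hm.2 m' hm'.1 (Ne.symm hne))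

theorem MonicR.coeff_eq_one [Semiring k] {lt : M → M → Prop} [Std.Asymm lt]
    {f : MonoidAlgebra k M} {m : M} (hf : MonicR lt f) (hm : IsLeadR lt f m) :
    f.coeff m = 1 := by
  obtain ⟨m', hm', h1⟩ := hf
  rwa [hm'.unique hm] at h1

@[simp]
theorem mono_one [Semiring k] [Monoid M] : mono k (1 : M) = 1 :=
  map_one (MonoidAlgebra.of k M)

theorem coeff_mono_mul_mul [Semiring k] [Monoid M] (f : MonoidAlgebra k M) (a b : M) :
    (mono k a * f * mono k b).coeff = Finsupp.mapDomain (fun m => a * m * b) f.coeff := by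
  show (MonoidAlgebra.single a (1 : k) * f * MonoidAlgebra.single b 1).coeff = _
  induction f using MonoidAlgebra.induction_linear with
  | zero => simp
  | add f g hf hg =>
    rw [mul_add, add_mul, MonoidAlgebra.coeff_add, hf, hg, MonoidAlgebra.coeff_add,
      Finsupp.mapDomain_add]
  | single m c =>
    rw [MonoidAlgebra.single_mul_single, MonoidAlgebra.single_mul_single, one_mul, mul_one,
      MonoidAlgebra.coeff_single, MonoidAlgebra.coeff_single, Finsupp.mapDomain_single]

theorem coeff_mono_mul_mul_apply [Semiring k] [CancelMonoid M] (f : MonoidAlgebra k M)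
    (a b m : M) : (mono k a * f * mono k b).coeff (a * m * b) = f.coeff m := by
  rw [coeff_mono_mul_mul, Finsupp.mapDomain_apply]
  exact fun u v h => mul_left_cancel (mul_right_cancel h)

theorem IsLeadR.mono_mul_mul [Semiring k] [CancelMonoid M] {lt : M → M → Prop}
    (hmul : ∀ u v w₁ w₂ : M, lt u v → lt (w₁ * u * w₂) (w₁ * v * w₂))
    {f : MonoidAlgebra k M} {m : M} (hm : IsLeadR lt f m) (a b : M) :
    IsLeadR lt (mono k a * f * mono k b) (a * m * b) := by
  classical
  refine ⟨?_, fun u hu hne => ?_⟩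
  · rw [Finsupp.mem_support_iff, coeff_mono_mul_mul_apply]
    exact Finsupp.mem_support_iff.1 hm.1
  · rw [coeff_mono_mul_mul] at hu
    obtain ⟨v, hv, rfl⟩ := Finset.mem_image.1 (Finsupp.mapDomain_support hu)
    exact hmul v m a b (hm.2 v hv fun h => hne (h ▸ rfl))

theorem IsLeadR.lt_of_sub [Ring k] {lt : M → M → Prop} {F G : MonoidAlgebra k M} {w m : M}
    (hF : IsLeadR lt F w) (hG : IsLeadR lt G w) (hcoeff : F.coeff w = G.coeff w)
    (hm : IsLeadR lt (F - G) m) : lt m w := by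
  classical
  have hsupp := hm.1
  rw [MonoidAlgebra.coeff_sub] at hsupp
  have hne : m ≠ w := by
    rintro rfl
    simp [hcoeff] at hsupp
  rcases Finset.mem_union.1 (Finsupp.support_sub hsupp) with h | h
  · exact hF.2 m h hne
  · exact hG.2 m h hne

end LeadingWord

section LexNW

variable {X Y : Type*} {ltX : FreeMonoid X → FreeMonoid X → Prop}
  {ltY : FreeMonoid Y → FreeMonoid Y → Prop}

instance [Std.Asymm ltX] [Std.Asymm ltY] : Std.Asymm (lexNW ltX ltY) where
  asymm u v := by
    rintro (h | ⟨h1, h2⟩) (h' | ⟨h1', h2'⟩)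
    · exact asymm h h'
    · exact asymm_of ltX h (h1' ▸ h)
    · exact asymm_of ltX h' (h1 ▸ h')
    · exact asymm h2 h2'

theorem lexNW_mul_mul (hX : ∀ u v w₁ w₂, ltX u v → ltX (w₁ * u * w₂) (w₁ * v * w₂))
    (hY : ∀ u v w₁ w₂, ltY u v → ltY (w₁ * u * w₂) (w₁ * v * w₂)) (u v w₁ w₂ : NW X Y)
    (h : lexNW ltX ltY u v) : lexNW ltX ltY (w₁ * u * w₂) (w₁ * v * w₂) := by
  rcases h with h | ⟨h1, h2⟩
  · exact Or.inl (hX _ _ _ _ h)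
  · exact Or.inr ⟨by simp [h1], hY _ _ _ _ h2⟩

end LexNW

theorem IsComp.exists_eq_sub {k X Y : Type*} [Ring k] {f g : MonoidAlgebra k (NW X Y)}
    {mf mg : NW X Y} {p : MonoidAlgebra k (NW X Y)} {w : NW X Y}
    (h : IsComp f g mf mg p w) :
    ∃ a₁ b₁ a₂ b₂ : NW X Y, w = a₁ * mf * b₁ ∧ w = a₂ * mg * b₂ ∧
      p = mono k a₁ * f * mono k b₁ - mono k a₂ * g * mono k b₂ := by
  obtain (⟨a, b, c, hx, (⟨rfl, rfl⟩ | ⟨rfl, rfl⟩)⟩ |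
          ⟨a, c, d, hy, (⟨rfl, rfl⟩ | ⟨rfl, rfl⟩)⟩ |
          ⟨a, b, c, d, hx, hy, rfl, rfl⟩ |
          ⟨a, b, c, d, hx, hy, rfl, rfl⟩ |
          ⟨a, b, c, hx, -, (⟨rfl, rfl⟩ | ⟨rfl, rfl⟩)⟩ |
          ⟨a, c, d, hy, -, (⟨rfl, rfl⟩ | ⟨rfl, rfl⟩)⟩ |
          ⟨a, b, c, d, hx, hy, -, -, rfl, rfl⟩ |
          ⟨a, b, c, d, hx, hy, -, -, rfl, rfl⟩ |
          ⟨a, b, c, d, hx, (⟨hy, -, rfl, rfl⟩ | ⟨hy, -, rfl, rfl⟩)⟩ |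
          ⟨a, b, c, d, hx, -, (⟨hy, rfl, rfl⟩ | ⟨hy, rfl, rfl⟩)⟩) := h
  · exact ⟨1, (1, c * mg.2), (a, mf.2 * c), (b, 1), by simp [Prod.ext_iff, mul_assoc, *]⟩
  · exact ⟨(1, mg.2 * c), 1, (a, 1), (b, c * mf.2), by simp [Prod.ext_iff, mul_assoc, *]⟩
  · exact ⟨1, (a * mg.1, 1), (mf.1 * a, c), (1, d), by simp [Prod.ext_iff, mul_assoc, *]⟩
  · exact ⟨(mg.1 * a, 1), 1, (1, c), (a * mf.1, d), by simp [Prod.ext_iff, mul_assoc, *]⟩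
  · exact ⟨1, 1, (a, c), (b, d), by simp [Prod.ext_iff, *]⟩
  · exact ⟨(1, c), (1, d), (a, 1), (b, 1), by simp [Prod.ext_iff, mul_assoc, *]⟩
  · exact ⟨1, (a, c * mg.2), (b, mf.2 * c), 1, by simp [Prod.ext_iff, mul_assoc, *]⟩
  · exact ⟨(1, mg.2 * c), (a, 1), (b, 1), (1, c * mf.2), by simp [Prod.ext_iff, mul_assoc, *]⟩
  · exact ⟨1, (a * mg.1, c), (mf.1 * a, d), 1, by simp [Prod.ext_iff, mul_assoc, *]⟩
  · exact ⟨(mg.1 * a, 1), (1, c), (1, d), (a * mf.1, 1), by simp [Prod.ext_iff, mul_assoc, *]⟩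
  · exact ⟨1, (a, c), (b, d), 1, by simp [Prod.ext_iff, *]⟩
  · exact ⟨(1, c), (a, 1), (b, 1), (1, d), by simp [Prod.ext_iff, mul_assoc, *]⟩
  · exact ⟨1, (1, c), (a, d), (b, 1), by simp [Prod.ext_iff, mul_assoc, *]⟩
  · exact ⟨(1, c), 1, (a, 1), (b, d), by simp [Prod.ext_iff, mul_assoc, *]⟩
  · exact ⟨1, (a, 1), (b, c), (1, d), by simp [Prod.ext_iff, mul_assoc, *]⟩
  · exact ⟨(1, c), (a, d), (b, 1), 1, by simp [Prod.ext_iff, mul_assoc, *]⟩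

theorem stmt_7_general {k X Y : Type*} [Field k]
    (ltX : FreeMonoid X → FreeMonoid X → Prop) (ltY : FreeMonoid Y → FreeMonoid Y → Prop)
    (hX : MonOrd ltX) (hY : MonOrd ltY)
    (f g : MonoidAlgebra k (NW X Y))
    (hf : MonicR (lexNW ltX ltY) f) (hg : MonicR (lexNW ltX ltY) g)
    (mf mg : NW X Y)
    (hmf : IsLeadR (lexNW ltX ltY) f mf) (hmg : IsLeadR (lexNW ltX ltY) g mg)
    (p : MonoidAlgebra k (NW X Y)) (w : NW X Y)
    (hcomp : IsComp f g mf mg p w)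
    (mp : NW X Y) (hmp : IsLeadR (lexNW ltX ltY) p mp) :
    lexNW ltX ltY mp w := by
  have := hX.1
  have := hY.1
  have hmul := lexNW_mul_mul hX.2.2 hY.2.2
  obtain ⟨a₁, b₁, a₂, b₂, rfl, hw, rfl⟩ := hcomp.exists_eq_sub
  refine (hmf.mono_mul_mul hmul a₁ b₁).lt_of_sub (hw ▸ hmg.mono_mul_mul hmul a₂ b₂) ?_ hmp
  rw [coeff_mono_mul_mul_apply, hw, coeff_mono_mul_mul_apply, hf.coeff_eq_one hmf,
    hg.coeff_eq_one hmg]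

/-- every composition `(f,g)_w` in `k⟨X⟩ ⊗ k⟨Y⟩` (of any of the types:
`X`-inclusion, `Y`-inclusion, `X,Y`-inclusion, `X,Y`-skew-inclusion, `X`-intersection,
`Y`-intersection, `X,Y`-intersection, `X,Y`-skew-intersection, and mixed types) has
leading word strictly less than the ambiguity `w`. -/
theorem stmt_7 {k X Y : Type*} [Field k]
    (ltX : FreeMonoid X → FreeMonoid X → Prop) (ltY : FreeMonoid Y → FreeMonoid Y → Prop)
    (hX : MonOrd ltX) (hY : MonOrd ltY)
    (f g : MonoidAlgebra k (NW X Y))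
    (hf : MonicR (lexNW ltX ltY) f) (hg : MonicR (lexNW ltX ltY) g)
    (mf mg : NW X Y)
    (hmf : IsLeadR (lexNW ltX ltY) f mf) (hmg : IsLeadR (lexNW ltX ltY) g mg)
    (p : MonoidAlgebra k (NW X Y)) (w : NW X Y)
    (hcomp : IsComp f g mf mg p w) (hp : p ≠ 0)
    (mp : NW X Y) (hmp : IsLeadR (lexNW ltX ltY) p mp) :
    lexNW ltX ltY mp w :=
  stmt_7_general ltX ltY hX hY f g hf hg mf mg hmf hmg p w hcomp mp hmp
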